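/- arXiv:1008.1113 — 2 statements merged into one kernel-verified Lean document; each statement's English description precedes it below -/
import Mathlib

section
/- Let n ≥ 1 and let p_1, …, p_n be integers with p_i ≥ 2. Then every typical rank r of format (p_1, …, p_n) over ℝ satisfies r · (p_1 + p_2 + ⋯ + p_n − n + 1) ≥ p_1 p_2 ⋯ p_n. -/
open MeasureTheory

noncomputable section

/-- The rank-one tensor `a₁ ⊗ ⋯ ⊗ aₙ`. -/
def rankOneTensor {n : ℕ} (p : Fin n → ℕ) (a : ∀ i, Fin (p i) → ℝ) :
    (∀ i, Fin (p i)) → ℝ :=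
  fun k => ∏ i, a i (k i)

/-- The rank of a tensor: the least `r` such that `T` is a sum of `r` rank-one tensors. -/
def tensorRank {n : ℕ} (p : Fin n → ℕ) (T : (∀ i, Fin (p i)) → ℝ) : ℕ :=
  sInf {r | ∃ a : Fin r → ∀ i, Fin (p i) → ℝ, T = ∑ h, rankOneTensor p (a h)}

/-- `r` is a typical rank of format `p` over `ℝ`: the set of tensors of rank exactly `r`
has positive Lebesgue measure. -/
def IsTypicalRank {n : ℕ} (p : Fin n → ℕ) (r : ℕ) : Prop :=
  0 < volume {T : (∀ i, Fin (p i)) → ℝ | tensorRank p T = r}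

/-!
Rescaling its factors, a rank-one tensor `a₁ ⊗ ⋯ ⊗ aₙ` can be written with `aᵢ(cᵢ) = 1` for all
`i ≠ i₀`, for some multi-index `c`; this leaves `∑ pᵢ - n + 1` free parameters. So the tensors of
rank `r` lie in finitely many (one per choice of the `r` multi-indices) ranges of `C¹` maps on a
space of dimension `r (∑ pᵢ - n + 1)`. These ranges have at most that Hausdorff dimension, hence
are Lebesgue-null when it is below `∏ pᵢ`.
-/

open Set Module

theorem volume_range_eq_zero_of_finrank_lt {ι E : Type*} [Fintype ι] [NormedAddCommGroup E]
    [NormedSpace ℝ E] [FiniteDimensional ℝ E] {f : E → ι → ℝ} (hf : ContDiff ℝ 1 f)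
    (h : finrank ℝ E < Fintype.card ι) : volume (range f) = 0 := by
  refine measure_zero_of_dimH_lt (d := Fintype.card ι) ?_ ?_
  · rw [NNReal.coe_natCast, hausdorffMeasure_pi_real]
  · exact hf.dimH_range_le.trans_lt (by exact_mod_cast h)

section Tensor

variable {n : ℕ} (p : Fin n → ℕ)

theorem rankOneTensor_smul (t : Fin n → ℝ) (a : ∀ i, Fin (p i) → ℝ) :
    rankOneTensor p (fun i => t i • a i) = (∏ i, t i) • rankOneTensor p a := by
  funext k
  simp [rankOneTensor, Finset.prod_mul_distrib]

theorem rankOneTensor_eq_zero_of_eq_zero {a : ∀ i, Fin (p i) → ℝ} {i : Fin n} (ha : a i = 0) :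
    rankOneTensor p a = 0 := by
  funext k
  exact Finset.prod_eq_zero (Finset.mem_univ i) (by simp [ha])

theorem rankOneTensor_single (k : ∀ i, Fin (p i)) :
    rankOneTensor p (fun i => Pi.single (k i) 1) = Pi.single k 1 := by
  funext m
  simp [rankOneTensor, Pi.single_apply, Finset.prod_boole, funext_iff]

theorem contDiff_rankOneTensor {m : WithTop ℕ∞} : ContDiff ℝ m (rankOneTensor p) :=
  contDiff_pi.2 fun k => contDiff_prod fun i _ =>
    contDiff_pi.1 (contDiff_pi.1 contDiff_id i) (k i)

theorem exists_eq_sum_rankOneTensor (i₀ : Fin n) (T : (∀ i, Fin (p i)) → ℝ) :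
    ∃ (r : ℕ) (a : Fin r → ∀ i, Fin (p i) → ℝ), T = ∑ h, rankOneTensor p (a h) := by
  classical
  let a (k : ∀ i, Fin (p i)) (i : Fin n) : Fin (p i) → ℝ :=
    Function.update (1 : Fin n → ℝ) i₀ (T k) i • Pi.single (k i) 1
  have ha (k) : rankOneTensor p (a k) = Pi.single k (T k) := by
    rw [rankOneTensor_smul, rankOneTensor_single]
    simp [Finset.prod_update_of_mem, ← Pi.single_smul']
  refine ⟨_, fun h => a ((Fintype.equivFin _).symm h), ?_⟩
  rw [Equiv.sum_comp (Fintype.equivFin _).symm (fun k => rankOneTensor p (a k))]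
  simp only [ha, Finset.univ_sum_single]

theorem exists_eq_sum_rankOneTensor_tensorRank (i₀ : Fin n) (T : (∀ i, Fin (p i)) → ℝ) :
    ∃ a : Fin (tensorRank p T) → ∀ i, Fin (p i) → ℝ, T = ∑ h, rankOneTensor p (a h) :=
  Nat.sInf_mem (exists_eq_sum_rankOneTensor p i₀ T)

/-- The free entries of factors normalized by `a i (c i) = 1` for `i ≠ i₀`; `pinnedFactors` puts
the pinned entries back. -/
abbrev PinnedCoords (i₀ : Fin n) (c : ∀ i, Fin (p i)) : Type :=
  ∀ i, {j : Fin (p i) // i = i₀ ∨ j ≠ c i} → ℝ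

def pinnedFactors (i₀ : Fin n) (c : ∀ i, Fin (p i)) (x : PinnedCoords p i₀ c) :
    ∀ i, Fin (p i) → ℝ :=
  fun i j => if h : i = i₀ ∨ j ≠ c i then x i ⟨j, h⟩ else 1

def pinnedSum {r : ℕ} (i₀ : Fin n) (c : Fin r → ∀ i, Fin (p i))
    (x : ∀ h, PinnedCoords p i₀ (c h)) : (∀ i, Fin (p i)) → ℝ :=
  ∑ h, rankOneTensor p (pinnedFactors p i₀ (c h) (x h))

variable {p}

theorem contDiff_pinnedFactors {m : WithTop ℕ∞} (i₀ : Fin n) (c : ∀ i, Fin (p i)) :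
    ContDiff ℝ m (pinnedFactors p i₀ c) := by
  refine contDiff_pi.2 fun i => contDiff_pi.2 fun j => ?_
  unfold pinnedFactors
  split_ifs with h
  · exact (contDiff_apply ℝ ℝ (⟨j, h⟩ : {j // i = i₀ ∨ j ≠ c i})).comp
      (contDiff_pi.1 contDiff_id i)
  · exact contDiff_const

theorem contDiff_pinnedSum {m : WithTop ℕ∞} {r : ℕ} (i₀ : Fin n)
    (c : Fin r → ∀ i, Fin (p i)) :
    ContDiff ℝ m (pinnedSum p i₀ c) := by
  unfold pinnedSum
  exact ContDiff.sum fun h _ => (contDiff_rankOneTensor p).comp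
    ((contDiff_pinnedFactors i₀ (c h)).comp (contDiff_pi.1 contDiff_id h))

theorem finrank_pinnedCoords (i₀ : Fin n) (c : ∀ i, Fin (p i)) :
    (finrank ℝ (PinnedCoords p i₀ c) : ℤ) = ∑ i, (p i : ℤ) - n + 1 := by
  have hcard (i : Fin n) : (Fintype.card {j : Fin (p i) // i = i₀ ∨ j ≠ c i} : ℤ) =
      p i - 1 + if i = i₀ then 1 else 0 := by
    by_cases hi : i = i₀
    · simp [hi]
    · simp [hi, Fintype.card_subtype_compl, Nat.cast_sub (c i).pos]
  rw [finrank_pi_fintype, Nat.cast_sum]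
  simp only [finrank_fintype_fun_eq_card, hcard, Finset.sum_add_distrib,
    Finset.sum_sub_distrib]
  simp

theorem finrank_pi_pinnedCoords {r : ℕ} (i₀ : Fin n) (c : Fin r → ∀ i, Fin (p i)) :
    (finrank ℝ (∀ h, PinnedCoords p i₀ (c h)) : ℤ) = r * (∑ i, (p i : ℤ) - n + 1) := by
  rw [finrank_pi_fintype, Nat.cast_sum]
  simp [finrank_pinnedCoords]

theorem pinnedFactors_restrict {i₀ : Fin n} {c : ∀ i, Fin (p i)} {b : ∀ i, Fin (p i) → ℝ}
    (hb : ∀ i ≠ i₀, b i (c i) = 1) : pinnedFactors p i₀ c (fun i j => b i j) = b := by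
  funext i j
  by_cases h : i = i₀ ∨ j ≠ c i
  · simp [pinnedFactors, h]
  · push Not at h
    simp [pinnedFactors, h, hb]

theorem exists_pinned_rankOneTensor_eq (hp : ∀ i, 0 < p i) (i₀ : Fin n)
    (a : ∀ i, Fin (p i) → ℝ) :
    ∃ (c : ∀ i, Fin (p i)) (b : ∀ i, Fin (p i) → ℝ),
      (∀ i ≠ i₀, b i (c i) = 1) ∧ rankOneTensor p b = rankOneTensor p a := by
  classical
  by_cases ha : ∀ i, a i ≠ 0
  · choose c hc using fun i => Function.ne_iff.1 (ha i)
    let t : Fin n → ℝ :=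
      Function.update (fun i => (a i (c i))⁻¹) i₀ (∏ i ∈ Finset.univ.erase i₀, a i (c i))
    have ht : ∏ i, t i = 1 := by
      rw [Finset.prod_update_of_mem (Finset.mem_univ i₀), Finset.sdiff_singleton_eq_erase,
        Finset.prod_inv_distrib]
      exact mul_inv_cancel₀ (Finset.prod_ne_zero_iff.2 fun i _ => hc i)
    refine ⟨c, fun i => t i • a i, fun i hi => ?_, ?_⟩
    · simpa [t, hi] using inv_mul_cancel₀ (hc i)
    · rw [rankOneTensor_smul, ht, one_smul]
  · push Not at ha
    obtain ⟨i₁, hi₁⟩ := ha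
    refine ⟨fun i => ⟨0, hp i⟩, fun i => if i = i₀ then 0 else 1, fun i hi => by simp [hi], ?_⟩
    rw [rankOneTensor_eq_zero_of_eq_zero p hi₁,
      rankOneTensor_eq_zero_of_eq_zero p (i := i₀) (by simp)]

theorem sum_rankOneTensor_mem_iUnion_range_pinnedSum (hp : ∀ i, 0 < p i) (i₀ : Fin n) {r : ℕ}
    (a : Fin r → ∀ i, Fin (p i) → ℝ) :
    ∑ h, rankOneTensor p (a h) ∈ ⋃ c : Fin r → ∀ i, Fin (p i), range (pinnedSum p i₀ c) := by
  choose c b hb hba using fun h => exists_pinned_rankOneTensor_eq hp i₀ (a h)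
  refine mem_iUnion.2 ⟨c, fun h i j => b h i j, ?_⟩
  simp only [pinnedSum, pinnedFactors_restrict (hb _), hba]

theorem setOf_tensorRank_eq_subset (hp : ∀ i, 0 < p i) (i₀ : Fin n) (r : ℕ) :
    {T | tensorRank p T = r} ⊆ ⋃ c : Fin r → ∀ i, Fin (p i), range (pinnedSum p i₀ c) := by
  rintro T (rfl : tensorRank p T = r)
  obtain ⟨a, ha⟩ := exists_eq_sum_rankOneTensor_tensorRank p i₀ T
  have := sum_rankOneTensor_mem_iUnion_range_pinnedSum hp i₀ a
  rwa [← ha] at this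

theorem volume_setOf_tensorRank_eq_eq_zero (hp : ∀ i, 0 < p i) (i₀ : Fin n) {r : ℕ}
    (hr : (r : ℤ) * (∑ i, (p i : ℤ) - n + 1) < ∏ i, (p i : ℤ)) :
    volume {T : (∀ i, Fin (p i)) → ℝ | tensorRank p T = r} = 0 :=
  measure_mono_null (setOf_tensorRank_eq_subset hp i₀ r) <| measure_iUnion_null fun c =>
    volume_range_eq_zero_of_finrank_lt (contDiff_pinnedSum i₀ c) <| by
      rw [Fintype.card_pi]
      simp only [Fintype.card_fin]
      zify
      rwa [finrank_pi_pinnedCoords]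

end Tensor

/-- Every typical rank `r` of format `(p₁,…,pₙ)` over `ℝ` satisfies
`r·(p₁ + ⋯ + pₙ − n + 1) ≥ p₁⋯pₙ`. -/
theorem typical_rank_lower_bound
    {n : ℕ} (hn : 1 ≤ n) (p : Fin n → ℕ) (hp : ∀ i, 2 ≤ p i)
    (r : ℕ) (hr : IsTypicalRank p r) :
    (∏ i, (p i : ℤ)) ≤ (r : ℤ) * ((∑ i, (p i : ℤ)) - n + 1) := by
  by_contra! h
  have hp_pos (i : Fin n) : 0 < p i := zero_lt_two.trans_le (hp i)
  exact hr.ne' (volume_setOf_tensorRank_eq_eq_zero hp_pos ⟨0, hn⟩ h)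

end
end

section
/- Let n ≥ 2 and let p_1, …, p_n be integers with 2 ≤ p_1 ≤ ⋯ ≤ p_n, set q = p_1⋯p_n − (p_1+⋯+p_n) + n, and let p_{n+1} be an integer with q ≤ p_{n+1} ≤ p_1⋯p_n. Let φ : (ℝ^{p_1} × ⋯ × ℝ^{p_{n+1}})^{p_{n+1}} → (space of format p_1 × ⋯ × p_{n+1} tensors) be the map φ(a^{(1)}_1,…,a^{(1)}_{n+1},…,a^{(p_{n+1})}_1,…,a^{(p_{n+1})}_{n+1}) = Σ_{h=1}^{p_{n+1}} a^{(h)}_1 ⊗ ⋯ ⊗ a^{(h)}_{n+1}. Then there exists a point z in the domain at which the Fréchet derivative of φ is a surjective linear map onto the space of format p_1 × ⋯ × p_{n+1} tensors. -/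
/-!
Take a point whose `h`-th summand is `c_h ⊗ e_h`, with `e_h` the standard basis vector of
`ℝ^{p_{n+1}}`. The slice of the image of `Dφ` at last index `t` is then spanned by the tangent
vectors of the Segre variety at `⊗ c_t` together with all the rank-one tensors `⊗ c_g`, so it
suffices that, for every `t`, these vectors span `ℝ^{p_1} ⊗ ⋯ ⊗ ℝ^{p_n}`.

For one fixed `t` this holds when every `c_g` is a basis tensor `e_{σ g}`: the tangent space at
`e_{σ t}` contains the `1 + Σ (p_i - 1)` basis tensors that differ from `σ t` in at most one
coordinate, and `q ≤ p_{n+1}` leaves enough other summands to hit all the remaining ones. The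
spanning condition is the nonvanishing of a Gram determinant, a polynomial in the `c_g`; each of
these finitely many polynomials is nonzero, hence so is their product, and a point where none of
them vanishes serves for all `t` at once.
-/

noncomputable section

open Matrix Function Finset

namespace Matrix

theorem surjective_mulVec_iff_rank_eq {m n K : Type*} [Fintype m] [Fintype n] [Field K]
    (A : Matrix m n K) : Surjective A.mulVec ↔ A.rank = Fintype.card m := by
  rw [rank, ← Module.finrank_fintype_fun_eq_card K, ← Submodule.eq_top_iff_finrank_eq,
    LinearMap.range_eq_top, coe_mulVecLin]

theorem surjective_mulVec_iff_det_mul_transpose_ne_zero {m n K : Type*} [Fintype m] [Fintype n]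
    [DecidableEq m] [Field K] [LinearOrder K] [IsStrictOrderedRing K] (A : Matrix m n K) :
    Surjective A.mulVec ↔ (A * Aᵀ).det ≠ 0 := by
  rw [surjective_mulVec_iff_rank_eq, ← rank_self_mul_transpose, ← surjective_mulVec_iff_rank_eq,
    mulVec_surjective_iff_isUnit, isUnit_iff_isUnit_det, isUnit_iff_ne_zero]

theorem surjective_mulVec_of_forall_exists_col_eq_single {m n R : Type*} [Fintype m] [Fintype n]
    [DecidableEq m] [DecidableEq n] [CommSemiring R] (A : Matrix m n R)
    (h : ∀ k, ∃ b, A.col b = Pi.single k 1) : Surjective A.mulVec := by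
  choose s hs using h
  refine fun u => ⟨∑ k, u k • Pi.single (s k) 1, ?_⟩
  simp only [mulVec_sum, mulVec_smul, mulVec_single, MulOpposite.op_one, one_smul, hs]
  exact (pi_eq_sum_univ' u).symm

end Matrix

theorem MvPolynomial.exists_forall_eval_ne_zero {σ ι R : Type*} [CommRing R] [IsDomain R]
    [Infinite R] [Fintype ι] (P : ι → MvPolynomial σ R) (hP : ∀ i, P i ≠ 0) :
    ∃ x, ∀ i, eval x (P i) ≠ 0 := by
  by_contra! h
  refine (prod_ne_zero_iff.2 fun i (_ : i ∈ univ) => hP i) (funext fun x => ?_)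
  obtain ⟨i, hi⟩ := h x
  simp only [map_prod, map_zero]
  exact prod_eq_zero (mem_univ i) hi

theorem Matrix.exists_forall_surjective_mulVec_map_eval {σ ι m n K : Type*} [Fintype ι]
    [Fintype m] [Fintype n] [DecidableEq m] [Field K] [LinearOrder K] [IsStrictOrderedRing K]
    (M : ι → Matrix m n (MvPolynomial σ K))
    (h : ∀ i, ∃ x, Surjective ((M i).map (MvPolynomial.eval x)).mulVec) :
    ∃ x, ∀ i, Surjective ((M i).map (MvPolynomial.eval x)).mulVec := by
  have heval (x : σ → K) (i : ι) : MvPolynomial.eval x (M i * (M i)ᵀ).det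
      = ((M i).map (MvPolynomial.eval x) * ((M i).map (MvPolynomial.eval x))ᵀ).det := by
    rw [RingHom.map_det, RingHom.mapMatrix_apply, Matrix.map_mul, transpose_map]
  simp only [surjective_mulVec_iff_det_mul_transpose_ne_zero, ← heval] at h ⊢
  refine MvPolynomial.exists_forall_eval_ne_zero _ fun i hi => ?_
  obtain ⟨x, hx⟩ := h i
  exact hx (by rw [hi, map_zero])

section Cross

variable {ι R : Type*} {X : ι → Type*}

theorem prod_single_one_apply [Fintype ι] [∀ i, DecidableEq (X i)] {S : Type*}
    [CommMonoidWithZero S] (κ k : ∀ i, X i) :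
    ∏ j, Pi.single (M := fun _ => S) (κ j) 1 (k j) = Pi.single (M := fun _ => S) κ 1 k := by
  simp [Pi.single_apply, Fintype.prod_boole, funext_iff]

theorem injective_sumElim_update_ne [DecidableEq ι] (k₀ : ∀ i, X i) :
    Injective (Sum.elim (fun il : Σ i, {l // l ≠ k₀ i} => update k₀ il.1 il.2.1)
      fun _ : Unit => k₀) := by
  rintro (⟨i, l, hl⟩ | ⟨⟩) (⟨i', l', hl'⟩ | ⟨⟩) h <;>
    simp only [Sum.elim_inl, Sum.elim_inr] at h
  · rcases eq_or_ne i i' with rfl | hii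
    · simpa using congrFun h i
    · exact (hl (by simpa [hii] using congrFun h i)).elim
  · exact (hl (by simpa using congrFun h i)).elim
  · exact (hl' (by simpa using (congrFun h i').symm)).elim
  · rfl

theorem exists_eq_and_forall_update_or_mem_range [Fintype ι] [DecidableEq ι] [Fintype R]
    [DecidableEq R] [∀ i, Fintype (X i)] [∀ i, DecidableEq (X i)]
    (hcard : Fintype.card (∀ i, X i) + Fintype.card ι ≤ Fintype.card R + ∑ i, Fintype.card (X i))
    (t : R) (k₀ : ∀ i, X i) :
    ∃ σ : R → ∀ i, X i, σ t = k₀ ∧ ∀ k, (∃ i l, update k₀ i l = k) ∨ k ∈ Set.range σ := by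
  set f := Sum.elim (fun il : Σ i, {l // l ≠ k₀ i} => update k₀ il.1 il.2.1) fun _ : Unit => k₀
  have hsum : ∑ i, (Fintype.card (X i) - 1) + Fintype.card ι = ∑ i, Fintype.card (X i) := by
    rw [Fintype.card_eq_sum_ones, ← sum_add_distrib]
    exact sum_congr rfl fun i _ => Nat.sub_add_cancel (Fintype.card_pos_iff.2 ⟨k₀ i⟩)
  have hcardM : Fintype.card {k // k ∉ Set.range f} ≤ Fintype.card {g // g ≠ t} := by
    have hK := Fintype.card_congr <| (Equiv.sumCongr (Equiv.ofInjective f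
      (injective_sumElim_update_ne k₀)) (Equiv.refl _)).trans (Equiv.sumCompl (· ∈ Set.range f))
    simp only [Fintype.card_sum, Fintype.card_sigma, Fintype.card_subtype_compl,
      Fintype.card_subtype_eq, Fintype.card_unit] at hK ⊢
    omega
  obtain ⟨e⟩ := Function.Embedding.nonempty_of_card_le hcardM
  have he : Injective fun m => (e m : R) := Subtype.val_injective.comp e.injective
  set σ := extend (fun m => (e m : R)) Subtype.val fun _ => k₀
  have hσt : σ t = k₀ := extend_apply' _ _ _ fun ⟨m, hm⟩ => (e m).2 hm
  refine ⟨σ, hσt, fun k => ?_⟩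
  by_cases hk : k ∈ Set.range f
  · obtain ⟨⟨i, l, -⟩ | -, rfl⟩ := hk
    · exact .inl ⟨i, l, rfl⟩
    · exact .inr ⟨t, hσt⟩
  · exact .inr ⟨e ⟨k, hk⟩, he.extend_apply _ _ ⟨k, hk⟩⟩

end Cross

section TangentMatrix

variable {ι R : Type*} {X : ι → Type*} [DecidableEq ι] [∀ i, DecidableEq (X i)]

/-- The columns are the tangent vectors `⊗ (c t)[i ↦ e_l]` of the Segre variety at `⊗ c t`,
followed by the rank-one tensors `⊗ c g`. -/
def tangentMatrix [Fintype ι] {S : Type*} [CommSemiring S] (c : R → ∀ i, X i → S) (t : R) :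
    Matrix (∀ i, X i) ((Σ i, X i) ⊕ R) S :=
  of fun k b => Sum.elim (fun il => ∏ j, update (c t) il.1 (Pi.single il.2 1) j (k j))
    (fun g => ∏ j, c g j (k j)) b

theorem tangentMatrix_map [Fintype ι] {S S' : Type*} [CommSemiring S] [CommSemiring S']
    (f : S →+* S') (c : R → ∀ i, X i → S) (t : R) :
    (tangentMatrix c t).map f = tangentMatrix (fun g i l => f (c g i l)) t := by
  ext k (il | g)
  · simp only [tangentMatrix, map_apply, of_apply, Sum.elim_inl, map_prod]
    refine prod_congr rfl fun j _ => ?_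
    rcases eq_or_ne j il.1 with rfl | hj
    · simp [Pi.single_apply, apply_ite f]
    · simp [update_of_ne hj]
  · simp [tangentMatrix]

theorem exists_forall_surjective_tangentMatrix_of_forall_exists [Fintype ι] [Fintype R]
    [∀ i, Fintype (X i)]
    (h : ∀ t : R, ∃ c : R → ∀ i, X i → ℝ, Surjective (tangentMatrix c t).mulVec) :
    ∃ c : R → ∀ i, X i → ℝ, ∀ t, Surjective (tangentMatrix c t).mulVec := by
  let M (t : R) := tangentMatrix (fun g i l => MvPolynomial.X (R := ℝ) (g, (⟨i, l⟩ : Σ i, X i))) t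
  have hM (x) (t) :
      (M t).map (MvPolynomial.eval x) = tangentMatrix (fun g i l => x (g, ⟨i, l⟩)) t := by
    simp only [M, tangentMatrix_map, MvPolynomial.eval_X]
  obtain ⟨x, hx⟩ := exists_forall_surjective_mulVec_map_eval M fun t => by
    obtain ⟨c, hc⟩ := h t
    exact ⟨fun v => c v.1 v.2.1 v.2.2, by rwa [hM]⟩
  exact ⟨fun g i l => x (g, ⟨i, l⟩), fun t => by rw [← hM]; exact hx t⟩

variable [Fintype ι] [Fintype R] [DecidableEq R] [∀ i, Fintype (X i)]

theorem exists_surjective_tangentMatrix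
    (hcard : Fintype.card (∀ i, X i) + Fintype.card ι ≤ Fintype.card R + ∑ i, Fintype.card (X i))
    (t : R) : ∃ c : R → ∀ i, X i → ℝ, Surjective (tangentMatrix c t).mulVec := by
  cases isEmpty_or_nonempty (∀ i, X i) with
  | inl _ => exact ⟨0, fun u => ⟨0, Subsingleton.elim _ _⟩⟩
  | inr hK =>
    obtain ⟨σ, hσt, hσ⟩ := exists_eq_and_forall_update_or_mem_range hcard t hK.some
    refine ⟨fun g i => Pi.single (σ g i) 1,
      surjective_mulVec_of_forall_exists_col_eq_single _ fun k => ?_⟩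
    rcases hσ k with ⟨i, l, rfl⟩ | ⟨g, rfl⟩
    · refine ⟨.inl ⟨i, l⟩, funext fun k => ?_⟩
      simp only [col, transpose_apply, tangentMatrix, of_apply, Sum.elim_inl, ← hσt,
        ← apply_update (fun j x => Pi.single (M := fun _ => ℝ) x 1), prod_single_one_apply]
    · exact ⟨.inr g, funext fun k => prod_single_one_apply _ _⟩

theorem exists_forall_surjective_tangentMatrix
    (hcard : Fintype.card (∀ i, X i) + Fintype.card ι ≤ Fintype.card R + ∑ i, Fintype.card (X i)) :
    ∃ c : R → ∀ i, X i → ℝ, ∀ t, Surjective (tangentMatrix c t).mulVec :=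
  exists_forall_surjective_tangentMatrix_of_forall_exists
    (exists_surjective_tangentMatrix hcard)

end TangentMatrix

theorem ContinuousMultilinearMap.fderiv_sum_apply_single {R ι F : Type*} {E : ι → Type*}
    [Fintype R] [DecidableEq R] [Fintype ι] [DecidableEq ι]
    [∀ i, NormedAddCommGroup (E i)] [∀ i, NormedSpace ℝ (E i)] [NormedAddCommGroup F]
    [NormedSpace ℝ F] (f : ContinuousMultilinearMap ℝ E F) (z : R → ∀ i, E i) (h : R) (i : ι)
    (y : E i) :
    fderiv ℝ (fun a : R → ∀ i, E i => ∑ g, f (a g)) z (Pi.single h (Pi.single i y))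
      = f (update (z h) i y) := by
  have hf : HasFDerivAt (fun a : R → ∀ i, E i => ∑ g, f (a g))
      (∑ g, (f.linearDeriv (z g)).comp (ContinuousLinearMap.proj g)) z :=
    HasFDerivAt.fun_sum fun g _ => (f.hasFDerivAt (z g)).comp z (hasFDerivAt_apply g z)
  have hzero (x : ∀ i, E i) (j : ι) : f (update x j 0) = 0 := f.map_coord_zero j (by simp)
  rw [hf.fderiv, _root_.sum_apply, sum_eq_single h (fun g _ hg => by simp [hg, hzero])
    (by simp), ContinuousLinearMap.comp_apply, ContinuousLinearMap.proj_apply, Pi.single_eq_same,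
    linearDeriv_apply, sum_eq_single i (fun j _ hj => by simp [hj, hzero]) (by simp),
    Pi.single_eq_same]

def rankOneTensorMap {n : ℕ} (p : Fin n → ℕ) :
    ContinuousMultilinearMap ℝ (fun i => Fin (p i) → ℝ) ((∀ i, Fin (p i)) → ℝ) :=
  .pi fun k => (ContinuousMultilinearMap.mkPiAlgebra ℝ (Fin n) ℝ).compContinuousLinearMap
    fun i => ContinuousLinearMap.proj (k i)

theorem coe_rankOneTensorMap {n : ℕ} (p : Fin n → ℕ) :
    ⇑(rankOneTensorMap p) = rankOneTensor p := by
  ext a k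
  simp [rankOneTensorMap, rankOneTensor]

section Snoc

variable {n : ℕ} {p : Fin (n + 1) → ℕ}

def tensorSnoc (b : Fin (p (Fin.last n)) → ℝ) :
    (((i : Fin n) → Fin (p i.castSucc)) → ℝ) →ₗ[ℝ] ((∀ i, Fin (p i)) → ℝ) where
  toFun A k := A (Fin.init k) * b (k (Fin.last n))
  map_add' _ _ := funext fun _ => add_mul _ _ _
  map_smul' _ _ := funext fun _ => mul_assoc _ _ _

theorem rankOneTensor_snoc (a : ∀ i : Fin n, Fin (p i.castSucc) → ℝ)
    (b : Fin (p (Fin.last n)) → ℝ) :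
    rankOneTensor p (Fin.snoc a b) = tensorSnoc b (rankOneTensor (fun i => p i.castSucc) a) := by
  ext k
  simp [rankOneTensor, tensorSnoc, Fin.prod_univ_castSucc, Fin.init]

theorem eq_sum_tensorSnoc_single (T : (∀ i, Fin (p i)) → ℝ) :
    T = ∑ t, tensorSnoc (Pi.single t 1) fun k => T (Fin.snoc k t) := by
  ext k
  simp [tensorSnoc, Pi.single_apply]

theorem surjective_fderiv_sum_rankOneTensor
    (c : Fin (p (Fin.last n)) → ∀ i : Fin n, Fin (p i.castSucc) → ℝ)
    (hc : ∀ t, Surjective (tangentMatrix c t).mulVec) :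
    Surjective (fderiv ℝ (fun a : Fin (p (Fin.last n)) → ∀ i, Fin (p i) → ℝ =>
      ∑ h, rankOneTensor p (a h)) fun g => Fin.snoc (c g) (Pi.single g 1)) := by
  set z : Fin (p (Fin.last n)) → ∀ i, Fin (p i) → ℝ := fun g => Fin.snoc (c g) (Pi.single g 1)
  set D := fderiv ℝ (fun a : Fin (p (Fin.last n)) → ∀ i, Fin (p i) → ℝ =>
      ∑ h, rankOneTensor p (a h)) z
  have hD (h : Fin (p (Fin.last n))) (i : Fin (n + 1)) (y : Fin (p i) → ℝ) :
      rankOneTensor p (update (z h) i y) ∈ LinearMap.range D.toLinearMap := by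
    refine ⟨Pi.single h (Pi.single i y), ?_⟩
    simp only [D, ← coe_rankOneTensorMap]
    exact (rankOneTensorMap p).fderiv_sum_apply_single z h i y
  have hslice (t : Fin (p (Fin.last n))) :
      LinearMap.range (tensorSnoc (Pi.single t 1)) ≤ LinearMap.range D.toLinearMap := by
    rw [LinearMap.range_eq_map,
      ← (LinearMap.range_eq_top (f := (tangentMatrix c t).mulVecLin)).2 (hc t),
      range_mulVecLin, Submodule.map_span_le]
    rintro _ ⟨⟨i, l⟩ | g, rfl⟩
    · have := hD t i.castSucc (Pi.single l 1)
      rwa [← Fin.snoc_update, rankOneTensor_snoc] at this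
    · have := hD g (Fin.last n) (Pi.single t 1)
      rwa [Fin.update_snoc_last, rankOneTensor_snoc] at this
  intro T
  rw [eq_sum_tensorSnoc_single T]
  exact sum_mem fun t _ => hslice t ⟨_, rfl⟩

end Snoc

theorem exists_point_with_surjective_fderiv_general
    {n : ℕ} (p : Fin (n + 1) → ℕ)
    (hq : (∏ i : Fin n, (p i.castSucc : ℤ)) - (∑ i : Fin n, (p i.castSucc : ℤ)) + n
        ≤ (p (Fin.last n) : ℤ)) :
    ∃ z : Fin (p (Fin.last n)) → ∀ i : Fin (n + 1), Fin (p i) → ℝ,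
      Function.Surjective
        ⇑(fderiv ℝ
          (fun a : Fin (p (Fin.last n)) → ∀ i : Fin (n + 1), Fin (p i) → ℝ =>
            ∑ h, rankOneTensor p (a h)) z) := by
  have hcard : Fintype.card (∀ i : Fin n, Fin (p i.castSucc)) + Fintype.card (Fin n)
      ≤ Fintype.card (Fin (p (Fin.last n))) + ∑ i : Fin n, Fintype.card (Fin (p i.castSucc)) := by
    simp only [Fintype.card_pi, Fintype.card_fin]
    zify
    linarith
  obtain ⟨c, hc⟩ := exists_forall_surjective_tangentMatrix hcard
  exact ⟨_, surjective_fderiv_sum_rankOneTensor c hc⟩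

/-- Under the perfectness bounds on `p_{n+1}`, there is a point at which the
Fréchet derivative of the parametrization map
`φ(a) = Σ_h a^{(h)}_1 ⊗ ⋯ ⊗ a^{(h)}_{n+1}` (with `p_{n+1}` summands) is surjective. -/
theorem exists_point_with_surjective_fderiv
    {n : ℕ} (hn : 2 ≤ n) (p : Fin (n + 1) → ℕ)
    (hp2 : 2 ≤ p 0)
    (hmono : ∀ i j : Fin n, i ≤ j → p i.castSucc ≤ p j.castSucc)
    (hq : (∏ i : Fin n, (p i.castSucc : ℤ)) - (∑ i : Fin n, (p i.castSucc : ℤ)) + n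
        ≤ (p (Fin.last n) : ℤ))
    (hub : (p (Fin.last n) : ℤ) ≤ ∏ i : Fin n, (p i.castSucc : ℤ)) :
    ∃ z : Fin (p (Fin.last n)) → ∀ i : Fin (n + 1), Fin (p i) → ℝ,
      Function.Surjective
        ⇑(fderiv ℝ
          (fun a : Fin (p (Fin.last n)) → ∀ i : Fin (n + 1), Fin (p i) → ℝ =>
            ∑ h, rankOneTensor p (a h)) z) :=
  exists_point_with_surjective_fderiv_general p hq

end
end
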